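/- arXiv:0809.2034 — 2 statements merged into one kernel-verified Lean document; each statement's English description precedes it below -/
import Mathlib

section
/- In the braid group B₄ = ⟨a, b, c | aba = bab, bcb = cbc, ac = ca⟩, the element x⁴ = (bac)⁴ lies in the center of B₄. -/
/-- Relators for the braid group `B₄ = ⟨a, b, c | aba = bab, bcb = cbc, ac = ca⟩`,
with generators indexed `0 ↦ a`, `1 ↦ b`, `2 ↦ c`. -/
def braidRels : Set (FreeGroup (Fin 3)) :=
  { FreeGroup.of 0 * FreeGroup.of 1 * FreeGroup.of 0 *
      (FreeGroup.of 1 * FreeGroup.of 0 * FreeGroup.of 1)⁻¹,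
    FreeGroup.of 1 * FreeGroup.of 2 * FreeGroup.of 1 *
      (FreeGroup.of 2 * FreeGroup.of 1 * FreeGroup.of 2)⁻¹,
    FreeGroup.of 0 * FreeGroup.of 2 * (FreeGroup.of 2 * FreeGroup.of 0)⁻¹ }

/-- The braid group on four strands. -/
abbrev B4 := PresentedGroup braidRels

namespace B4

def a : B4 := PresentedGroup.of 0
def b : B4 := PresentedGroup.of 1
def c : B4 := PresentedGroup.of 2
def d : B4 := (a * c)⁻¹ * b * (a * c)
def e : B4 := a⁻¹ * b * a
def f : B4 := c⁻¹ * b * c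
def x : B4 := b * a * c

end B4

open B4

private lemma relmk {r : FreeGroup (Fin 3)} (h : r ∈ braidRels) :
    PresentedGroup.mk braidRels r = 1 :=
  (QuotientGroup.eq_one_iff r).mpr (Subgroup.subset_normalClosure h)

private lemma rel1 : a * b * a = b * a * b := by
  have h := relmk (show _ ∈ braidRels from Or.inl rfl)
  rw [map_mul, map_mul, map_inv, map_mul, map_mul] at h
  have := mul_inv_eq_one.mp h
  exact this

private lemma rel2 : b * c * b = c * b * c := by
  have h := relmk (show _ ∈ braidRels from Or.inr (Or.inl rfl))
  rw [map_mul, map_mul, map_inv, map_mul, map_mul] at h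
  exact mul_inv_eq_one.mp h

private lemma rel3' : a * c = c * a := by
  have h := relmk (show _ ∈ braidRels from Or.inr (Or.inr rfl))
  rw [map_mul, map_inv, map_mul] at h
  exact mul_inv_eq_one.mp h

private lemma h1 : a * (b * a) = b * (a * b) := by
  rw [← mul_assoc, ← mul_assoc]; exact rel1

private lemma h2 : b * (c * b) = c * (b * c) := by
  rw [← mul_assoc, ← mul_assoc]; exact rel2

private lemma h3 : a * c = c * a := rel3'

private lemma T1 (g : B4) : a * (b * (a * g)) = b * (a * (b * g)) := by
  rw [← mul_assoc, ← mul_assoc, ← mul_assoc, ← mul_assoc, rel1]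

private lemma T2 (g : B4) : b * (c * (b * g)) = c * (b * (c * g)) := by
  rw [← mul_assoc, ← mul_assoc, ← mul_assoc, ← mul_assoc, rel2]

private lemma T3 (g : B4) : a * (c * g) = c * (a * g) := by
  rw [← mul_assoc, ← mul_assoc, rel3']

private lemma key_a : b * (a * (c * (b * (a * (c * (a)))))) = c * (b * (a * (c * (b * (a * (c)))))) := by
  calc b * (a * (c * (b * (a * (c * (a))))))
    _ = b * (c * (a * (b * (a * (c * (a)))))) := by conv_lhs => rw [T3 (b * (a * (c * (a))))]
    _ = b * (c * (b * (a * (b * (c * (a)))))) := by conv_lhs => rw [T1 (c * (a))]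
    _ = c * (b * (c * (a * (b * (c * (a)))))) := by conv_lhs => rw [T2 (a * (b * (c * (a))))]
    _ = c * (b * (a * (c * (b * (c * (a)))))) := by conv_lhs => rw [← T3 (b * (c * (a)))]
    _ = c * (b * (a * (c * (b * (a * (c)))))) := by conv_lhs => rw [← h3]
private lemma key_b : b * (a * (c * (b * (a * (c * (b)))))) = b * (b * (a * (c * (b * (a * (c)))))) := by
  calc b * (a * (c * (b * (a * (c * (b))))))
    _ = b * (c * (a * (b * (a * (c * (b)))))) := by conv_lhs => rw [T3 (b * (a * (c * (b))))]
    _ = b * (c * (b * (a * (b * (c * (b)))))) := by conv_lhs => rw [T1 (c * (b))]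
    _ = b * (c * (b * (a * (c * (b * (c)))))) := by conv_lhs => rw [h2]
    _ = b * (c * (b * (c * (a * (b * (c)))))) := by conv_lhs => rw [T3 (b * (c))]
    _ = b * (b * (c * (b * (a * (b * (c)))))) := by conv_lhs => rw [← T2 (a * (b * (c)))]
    _ = b * (b * (c * (a * (b * (a * (c)))))) := by conv_lhs => rw [← T1 (c)]
    _ = b * (b * (a * (c * (b * (a * (c)))))) := by conv_lhs => rw [← T3 (b * (a * (c)))]
private lemma key_c : b * (a * (c * (b * (a * (c * (c)))))) = a * (b * (a * (c * (b * (a * (c)))))) := by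
  calc b * (a * (c * (b * (a * (c * (c))))))
    _ = b * (a * (c * (b * (c * (a * (c)))))) := by conv_lhs => rw [T3 (c)]
    _ = b * (a * (b * (c * (b * (a * (c)))))) := by conv_lhs => rw [← T2 (a * (c))]
    _ = a * (b * (a * (c * (b * (a * (c)))))) := by conv_lhs => rw [← T1 (c * (b * (a * (c))))]

private lemma ca' : (x * x) * a = c * (x * x) := by
  show (b * a * c) * (b * a * c) * a = c * ((b * a * c) * (b * a * c))
  simp only [mul_assoc]
  exact key_a

private lemma cb' : (x * x) * b = b * (x * x) := by
  show (b * a * c) * (b * a * c) * b = b * ((b * a * c) * (b * a * c))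
  simp only [mul_assoc]
  exact key_b

private lemma cc' : (x * x) * c = a * (x * x) := by
  show (b * a * c) * (b * a * c) * c = a * ((b * a * c) * (b * a * c))
  simp only [mul_assoc]
  exact key_c

private lemma hx4 : x ^ 4 = (x * x) * (x * x) := by
  rw [show (4 : ℕ) = 2 + 2 from rfl, pow_add, pow_two]

private lemma commA : x ^ 4 * a = a * x ^ 4 := by
  rw [hx4, mul_assoc, ca', ← mul_assoc, cc', mul_assoc]

private lemma commB : x ^ 4 * b = b * x ^ 4 := by
  rw [hx4, mul_assoc, cb', ← mul_assoc, cb', mul_assoc]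

private lemma commC : x ^ 4 * c = c * x ^ 4 := by
  rw [hx4, mul_assoc, cc', ← mul_assoc, ca', mul_assoc]

theorem statement3 : x ^ 4 ∈ Subgroup.center B4 := by
  rw [Subgroup.mem_center_iff]
  intro g
  have hg : g ∈ Subgroup.centralizer {x ^ 4} := by
    refine PresentedGroup.generated_by braidRels _ ?_ g
    intro j
    fin_cases j <;> rw [Subgroup.mem_centralizer_iff] <;> intro s hs <;>
      rw [Set.mem_singleton_iff] at hs <;> subst hs
    · exact commA
    · exact commB
    · exact commC
  exact ((Subgroup.mem_centralizer_iff.mp hg) (x ^ 4) rfl).symm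
end

section
/- In the quotient of the braid group B₄ = ⟨a, b, c | aba = bab, bcb = cbc, ac = ca⟩ by its center, the image of the element x = bac has order exactly 4. -/
open B4

namespace B4Aux

open B4

lemma mk_rel {r : FreeGroup (Fin 3)} (hr : r ∈ braidRels) :
    PresentedGroup.mk braidRels r = 1 :=
  (QuotientGroup.eq_one_iff r).mpr (Subgroup.subset_normalClosure hr)

lemma rab : a * b * a = b * a * b := by
  have h := mk_rel (Set.mem_insert _ _)
  rw [map_mul, map_mul, map_inv, map_mul, map_mul, mul_inv_eq_one] at h
  exact h

lemma rbc : b * c * b = c * b * c := by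
  have h := mk_rel (Set.mem_insert_of_mem _ (Set.mem_insert _ _))
  rw [map_mul, map_mul, map_inv, map_mul, map_mul, mul_inv_eq_one] at h
  exact h

lemma rac : a * c = c * a := by
  have h := mk_rel (Set.mem_insert_of_mem _ (Set.mem_insert_of_mem _ rfl))
  rw [map_mul, map_inv, map_mul, mul_inv_eq_one] at h
  exact h

lemma rab_c : ∀ g : B4, a * (b * (a * g)) = b * (a * (b * g)) := by
  intro g
  rw [← mul_assoc, ← mul_assoc, rab, mul_assoc, mul_assoc]

lemma rbc_c : ∀ g : B4, b * (c * (b * g)) = c * (b * (c * g)) := by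
  intro g
  rw [← mul_assoc, ← mul_assoc, rbc, mul_assoc, mul_assoc]

lemma rac_c : ∀ g : B4, a * (c * g) = c * (a * g) := by
  intro g
  rw [← mul_assoc, rac, mul_assoc]

lemma comm_a_w : ∀ g : B4, a * (b * (c * (a * (b * (c * (a * (b * (c * (a * (b * (c * (a * (g))))))))))))) = a * (a * (b * (c * (a * (b * (c * (a * (b * (c * (a * (b * (c * (g))))))))))))) := by
  intro g
  calc a * (b * (c * (a * (b * (c * (a * (b * (c * (a * (b * (c * (a * (g)))))))))))))
    _ = a * (b * (a * (c * (b * (c * (a * (b * (c * (a * (b * (c * (a * (g))))))))))))) := by exact congrArg (fun t => a * (b * (t))) ((rac_c (b * (c * (a * (b * (c * (a * (b * (c * (a * (g))))))))))).symm)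
    _ = a * (b * (a * (b * (c * (b * (a * (b * (c * (a * (b * (c * (a * (g))))))))))))) := by exact congrArg (fun t => a * (b * (a * (t)))) ((rbc_c (a * (b * (c * (a * (b * (c * (a * (g))))))))).symm)
    _ = a * (a * (b * (a * (c * (b * (a * (b * (c * (a * (b * (c * (a * (g))))))))))))) := by exact congrArg (fun t => a * (t)) ((rab_c (c * (b * (a * (b * (c * (a * (b * (c * (a * (g))))))))))).symm)
    _ = a * (a * (b * (c * (a * (b * (a * (b * (c * (a * (b * (c * (a * (g))))))))))))) := by exact congrArg (fun t => a * (a * (b * (t)))) (rac_c (b * (a * (b * (c * (a * (b * (c * (a * (g))))))))))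
    _ = a * (a * (b * (c * (a * (b * (a * (b * (c * (a * (b * (a * (c * (g))))))))))))) := by exact congrArg (fun t => a * (a * (b * (c * (a * (b * (a * (b * (c * (a * (b * (t)))))))))))) ((rac_c (g)).symm)
    _ = a * (a * (b * (c * (a * (b * (a * (b * (c * (b * (a * (b * (c * (g))))))))))))) := by exact congrArg (fun t => a * (a * (b * (c * (a * (b * (a * (b * (c * (t)))))))))) (rab_c (c * (g)))
    _ = a * (a * (b * (c * (a * (b * (a * (c * (b * (c * (a * (b * (c * (g))))))))))))) := by exact congrArg (fun t => a * (a * (b * (c * (a * (b * (a * (t)))))))) (rbc_c (a * (b * (c * (g)))))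
    _ = a * (a * (b * (c * (a * (b * (c * (a * (b * (c * (a * (b * (c * (g))))))))))))) := by exact congrArg (fun t => a * (a * (b * (c * (a * (b * (t))))))) (rac_c (b * (c * (a * (b * (c * (g)))))))

lemma comm_a_w1 : a * (b * (c * (a * (b * (c * (a * (b * (c * (a * (b * (c * (a)))))))))))) = a * (a * (b * (c * (a * (b * (c * (a * (b * (c * (a * (b * (c)))))))))))) := by
  have h := comm_a_w 1
  simpa only [mul_one] using h


lemma comm_b_w : ∀ g : B4, a * (b * (c * (a * (b * (c * (a * (b * (c * (a * (b * (c * (b * (g))))))))))))) = b * (a * (b * (c * (a * (b * (c * (a * (b * (c * (a * (b * (c * (g))))))))))))) := by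
  intro g
  calc a * (b * (c * (a * (b * (c * (a * (b * (c * (a * (b * (c * (b * (g)))))))))))))
    _ = a * (b * (c * (a * (b * (c * (a * (b * (c * (a * (c * (b * (c * (g))))))))))))) := by exact congrArg (fun t => a * (b * (c * (a * (b * (c * (a * (b * (c * (a * (t))))))))))) (rbc_c (g))
    _ = a * (b * (c * (a * (b * (c * (a * (b * (c * (c * (a * (b * (c * (g))))))))))))) := by exact congrArg (fun t => a * (b * (c * (a * (b * (c * (a * (b * (c * (t)))))))))) (rac_c (b * (c * (g))))
    _ = a * (b * (a * (c * (b * (c * (a * (b * (c * (c * (a * (b * (c * (g))))))))))))) := by exact congrArg (fun t => a * (b * (t))) ((rac_c (b * (c * (a * (b * (c * (c * (a * (b * (c * (g))))))))))).symm)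
    _ = b * (a * (b * (c * (b * (c * (a * (b * (c * (c * (a * (b * (c * (g))))))))))))) := by exact rab_c (c * (b * (c * (a * (b * (c * (c * (a * (b * (c * (g)))))))))))
    _ = b * (a * (b * (c * (b * (a * (c * (b * (c * (c * (a * (b * (c * (g))))))))))))) := by exact congrArg (fun t => b * (a * (b * (c * (b * (t)))))) ((rac_c (b * (c * (c * (a * (b * (c * (g)))))))).symm)
    _ = b * (a * (b * (c * (b * (a * (b * (c * (b * (c * (a * (b * (c * (g))))))))))))) := by exact congrArg (fun t => b * (a * (b * (c * (b * (a * (t))))))) ((rbc_c (c * (a * (b * (c * (g)))))).symm)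
    _ = b * (a * (b * (c * (a * (b * (a * (c * (b * (c * (a * (b * (c * (g))))))))))))) := by exact congrArg (fun t => b * (a * (b * (c * (t))))) ((rab_c (c * (b * (c * (a * (b * (c * (g)))))))).symm)
    _ = b * (a * (b * (c * (a * (b * (c * (a * (b * (c * (a * (b * (c * (g))))))))))))) := by exact congrArg (fun t => b * (a * (b * (c * (a * (b * (t))))))) (rac_c (b * (c * (a * (b * (c * (g)))))))

lemma comm_b_w1 : a * (b * (c * (a * (b * (c * (a * (b * (c * (a * (b * (c * (b)))))))))))) = b * (a * (b * (c * (a * (b * (c * (a * (b * (c * (a * (b * (c)))))))))))) := by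
  have h := comm_b_w 1
  simpa only [mul_one] using h


lemma comm_c_w : ∀ g : B4, a * (b * (c * (a * (b * (c * (a * (b * (c * (a * (b * (c * (c * (g))))))))))))) = c * (a * (b * (c * (a * (b * (c * (a * (b * (c * (a * (b * (c * (g))))))))))))) := by
  intro g
  calc a * (b * (c * (a * (b * (c * (a * (b * (c * (a * (b * (c * (c * (g)))))))))))))
    _ = a * (b * (c * (a * (b * (a * (c * (b * (c * (a * (b * (c * (c * (g))))))))))))) := by exact congrArg (fun t => a * (b * (c * (a * (b * (t)))))) ((rac_c (b * (c * (a * (b * (c * (c * (g)))))))).symm)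
    _ = a * (b * (c * (b * (a * (b * (c * (b * (c * (a * (b * (c * (c * (g))))))))))))) := by exact congrArg (fun t => a * (b * (c * (t)))) (rab_c (c * (b * (c * (a * (b * (c * (c * (g)))))))))
    _ = a * (c * (b * (c * (a * (b * (c * (b * (c * (a * (b * (c * (c * (g))))))))))))) := by exact congrArg (fun t => a * (t)) (rbc_c (a * (b * (c * (b * (c * (a * (b * (c * (c * (g)))))))))))
    _ = c * (a * (b * (c * (a * (b * (c * (b * (c * (a * (b * (c * (c * (g))))))))))))) := by exact rac_c (b * (c * (a * (b * (c * (b * (c * (a * (b * (c * (c * (g))))))))))))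
    _ = c * (a * (b * (c * (a * (b * (c * (b * (a * (c * (b * (c * (c * (g))))))))))))) := by exact congrArg (fun t => c * (a * (b * (c * (a * (b * (c * (b * (t))))))))) ((rac_c (b * (c * (c * (g))))).symm)
    _ = c * (a * (b * (c * (a * (b * (c * (b * (a * (b * (c * (b * (c * (g))))))))))))) := by exact congrArg (fun t => c * (a * (b * (c * (a * (b * (c * (b * (a * (t)))))))))) ((rbc_c (c * (g))).symm)
    _ = c * (a * (b * (c * (a * (b * (c * (a * (b * (a * (c * (b * (c * (g))))))))))))) := by exact congrArg (fun t => c * (a * (b * (c * (a * (b * (c * (t)))))))) ((rab_c (c * (b * (c * (g))))).symm)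
    _ = c * (a * (b * (c * (a * (b * (c * (a * (b * (c * (a * (b * (c * (g))))))))))))) := by exact congrArg (fun t => c * (a * (b * (c * (a * (b * (c * (a * (b * (t)))))))))) (rac_c (b * (c * (g))))

lemma comm_c_w1 : a * (b * (c * (a * (b * (c * (a * (b * (c * (a * (b * (c * (c)))))))))))) = c * (a * (b * (c * (a * (b * (c * (a * (b * (c * (a * (b * (c)))))))))))) := by
  have h := comm_c_w 1
  simpa only [mul_one] using h


lemma x4_w : ∀ g : B4, b * (a * (c * (b * (a * (c * (b * (a * (c * (b * (a * (c * (g)))))))))))) = a * (b * (c * (a * (b * (c * (a * (b * (c * (a * (b * (c * (g)))))))))))) := by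
  intro g
  calc b * (a * (c * (b * (a * (c * (b * (a * (c * (b * (a * (c * (g))))))))))))
    _ = b * (a * (c * (b * (c * (a * (b * (a * (c * (b * (a * (c * (g)))))))))))) := by exact congrArg (fun t => b * (a * (c * (b * (t))))) (rac_c (b * (a * (c * (b * (a * (c * (g))))))))
    _ = b * (a * (b * (c * (b * (a * (b * (a * (c * (b * (a * (c * (g)))))))))))) := by exact congrArg (fun t => b * (a * (t))) ((rbc_c (a * (b * (a * (c * (b * (a * (c * (g))))))))).symm)
    _ = a * (b * (a * (c * (b * (a * (b * (a * (c * (b * (a * (c * (g)))))))))))) := by exact (rab_c (c * (b * (a * (b * (a * (c * (b * (a * (c * (g))))))))))).symm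
    _ = a * (b * (c * (a * (b * (a * (b * (a * (c * (b * (a * (c * (g)))))))))))) := by exact congrArg (fun t => a * (b * (t))) (rac_c (b * (a * (b * (a * (c * (b * (a * (c * (g))))))))))
    _ = a * (b * (c * (a * (b * (a * (b * (c * (a * (b * (a * (c * (g)))))))))))) := by exact congrArg (fun t => a * (b * (c * (a * (b * (a * (b * (t)))))))) (rac_c (b * (a * (c * (g)))))
    _ = a * (b * (c * (a * (b * (a * (b * (c * (b * (a * (b * (c * (g)))))))))))) := by exact congrArg (fun t => a * (b * (c * (a * (b * (a * (b * (c * (t))))))))) (rab_c (c * (g)))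
    _ = a * (b * (c * (a * (b * (a * (c * (b * (c * (a * (b * (c * (g)))))))))))) := by exact congrArg (fun t => a * (b * (c * (a * (b * (a * (t))))))) (rbc_c (a * (b * (c * (g)))))
    _ = a * (b * (c * (a * (b * (c * (a * (b * (c * (a * (b * (c * (g)))))))))))) := by exact congrArg (fun t => a * (b * (c * (a * (b * (t)))))) (rac_c (b * (c * (a * (b * (c * (g)))))))

lemma x4_w1 : b * (a * (c * (b * (a * (c * (b * (a * (c * (b * (a * (c))))))))))) = a * (b * (c * (a * (b * (c * (a * (b * (c * (a * (b * (c))))))))))) := by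
  have h := x4_w 1
  simpa only [mul_one] using h


lemma comm_a : (a*b*c)^4 * a = a * ((a*b*c)^4) := by
  calc (a*b*c)^4 * a
      = a * (b * (c * (a * (b * (c * (a * (b * (c * (a * (b * (c * (a)))))))))))) := by simp only [pow_succ, pow_zero, one_mul]; group
    _ = a * (a * (b * (c * (a * (b * (c * (a * (b * (c * (a * (b * (c)))))))))))) := comm_a_w1
    _ = a * ((a*b*c)^4) := by simp only [pow_succ, pow_zero, one_mul]; group

lemma comm_b : (a*b*c)^4 * b = b * ((a*b*c)^4) := by
  calc (a*b*c)^4 * b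
      = a * (b * (c * (a * (b * (c * (a * (b * (c * (a * (b * (c * (b)))))))))))) := by simp only [pow_succ, pow_zero, one_mul]; group
    _ = b * (a * (b * (c * (a * (b * (c * (a * (b * (c * (a * (b * (c)))))))))))) := comm_b_w1
    _ = b * ((a*b*c)^4) := by simp only [pow_succ, pow_zero, one_mul]; group

lemma comm_c : (a*b*c)^4 * c = c * ((a*b*c)^4) := by
  calc (a*b*c)^4 * c
      = a * (b * (c * (a * (b * (c * (a * (b * (c * (a * (b * (c * (c)))))))))))) := by simp only [pow_succ, pow_zero, one_mul]; group
    _ = c * (a * (b * (c * (a * (b * (c * (a * (b * (c * (a * (b * (c)))))))))))) := comm_c_w1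
    _ = c * ((a*b*c)^4) := by simp only [pow_succ, pow_zero, one_mul]; group

lemma hx4 : x^4 = (a*b*c)^4 := by
  show (b*a*c)^4 = (a*b*c)^4
  calc (b*a*c)^4
      = b * (a * (c * (b * (a * (c * (b * (a * (c * (b * (a * (c)))))))))) ) := by simp only [pow_succ, pow_zero, one_mul]; group
    _ = a * (b * (c * (a * (b * (c * (a * (b * (c * (a * (b * (c)))))))))) ) := x4_w1
    _ = (a*b*c)^4 := by simp only [pow_succ, pow_zero, one_mul]; group

lemma central : (a*b*c)^4 ∈ Subgroup.center B4 := by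
  rw [Subgroup.mem_center_iff]
  intro g
  have hg : g ∈ Subgroup.centralizer {(a*b*c)^4} := by
    refine PresentedGroup.generated_by _ _ (fun j => ?_) g
    rw [Subgroup.mem_centralizer_iff]
    intro h hh
    rw [Set.mem_singleton_iff] at hh
    subst hh
    fin_cases j
    · exact comm_a
    · exact comm_b
    · exact comm_c
  exact (Subgroup.mem_centralizer_iff.mp hg _ (Set.mem_singleton _)).symm

lemma x4_central : x^4 ∈ Subgroup.center B4 := by
  rw [hx4]; exact central

def fS : Fin 3 → Equiv.Perm (Fin 4) := ![Equiv.swap 0 1, Equiv.swap 1 2, Equiv.swap 2 3]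

lemma hf : ∀ r ∈ braidRels, FreeGroup.lift fS r = 1 := by
  intro r hr
  simp only [braidRels, Set.mem_insert_iff, Set.mem_singleton_iff] at hr
  rcases hr with rfl | rfl | rfl <;>
    · simp only [map_mul, map_inv, FreeGroup.lift_apply_of, fS, Matrix.cons_val_zero,
        Matrix.cons_val_one, Matrix.head_cons, Matrix.cons_val_two, Matrix.tail_cons]
      decide

def φ : B4 →* Equiv.Perm (Fin 4) := PresentedGroup.toGroup hf

lemma φa : φ a = Equiv.swap 0 1 := by
  simp [φ, a, PresentedGroup.toGroup.of, fS]

lemma φb : φ b = Equiv.swap 1 2 := by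
  simp [φ, b, PresentedGroup.toGroup.of, fS]

lemma φc : φ c = Equiv.swap 2 3 := by
  simp [φ, c, PresentedGroup.toGroup.of, fS]

lemma φx : φ x = Equiv.swap 1 2 * (Equiv.swap 0 1 * Equiv.swap 2 3) := by
  show φ (b * a * c) = _
  rw [map_mul, map_mul, φa, φb, φc, mul_assoc]

lemma x_not_central : x ∉ Subgroup.center B4 := by
  intro hx
  have h := (Subgroup.mem_center_iff.mp hx) a
  have h2 := congrArg φ h
  rw [map_mul, map_mul, φa, φx] at h2
  exact absurd h2 (by decide)

lemma x2_not_central : x^2 ∉ Subgroup.center B4 := by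
  intro hx
  have h := (Subgroup.mem_center_iff.mp hx) a
  have h2 := congrArg φ h
  rw [map_mul, map_mul, map_pow, φa, φx] at h2
  exact absurd h2 (by decide)

end B4Aux

open B4Aux

theorem statement7 :
    orderOf (QuotientGroup.mk x : B4 ⧸ Subgroup.center B4) = 4 := by
  have h4 : (QuotientGroup.mk x : B4 ⧸ Subgroup.center B4)^4 = 1 := by
    have h : (QuotientGroup.mk' (Subgroup.center B4)) (x^4) = 1 :=
      (QuotientGroup.eq_one_iff _).mpr x4_central
    rw [map_pow] at h
    exact h
  have hdvd : orderOf (QuotientGroup.mk x : B4 ⧸ Subgroup.center B4) ∣ 4 :=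
    orderOf_dvd_of_pow_eq_one h4
  have hne1 : (QuotientGroup.mk x : B4 ⧸ Subgroup.center B4) ≠ 1 := by
    intro h
    exact x_not_central ((QuotientGroup.eq_one_iff x).mp h)
  have hne2 : (QuotientGroup.mk x : B4 ⧸ Subgroup.center B4)^2 ≠ 1 := by
    intro h
    apply x2_not_central
    have h' : (QuotientGroup.mk' (Subgroup.center B4)) (x^2) = 1 := by
      rw [map_pow]; exact h
    exact (QuotientGroup.eq_one_iff _).mp h'
  set n := orderOf (QuotientGroup.mk x : B4 ⧸ Subgroup.center B4) with hn
  have hle : n ≤ 4 := Nat.le_of_dvd (by norm_num) hdvd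
  interval_cases n
  · exact absurd hdvd (by norm_num)
  · exact absurd (orderOf_eq_one_iff.mp hn.symm) hne1
  · have := pow_orderOf_eq_one (QuotientGroup.mk x : B4 ⧸ Subgroup.center B4)
    rw [← hn] at this
    exact absurd this hne2
  · exact absurd hdvd (by norm_num)
  · rfl
end
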